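/- arXiv:1210.3286 — 4 statements merged into one kernel-verified Lean document; each statement's English description precedes it below -/
import Mathlib

section
/- Let f, g be smooth vector fields on U ⊆ ℝⁿ, α, λ smooth functions with [g, f] = α·f + λ·g, and ψ smooth with X_g(ψ) = 0 and X_f(ψ)(x) ≠ 0 for all x ∈ U. Then on U one has [g, (1/X_f(ψ))·f] = (λ / X_f(ψ))·g. -/
noncomputable def lieDeriv {n : ℕ} (f : (Fin n → ℝ) → (Fin n → ℝ))
    (φ : (Fin n → ℝ) → ℝ) : (Fin n → ℝ) → ℝ :=
  fun x => fderiv ℝ φ x (f x)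

noncomputable def lieBracket {n : ℕ} (g f : (Fin n → ℝ) → (Fin n → ℝ)) :
    (Fin n → ℝ) → (Fin n → ℝ) :=
  fun x => fderiv ℝ f x (g x) - fderiv ℝ g x (f x)

/-- If [g,f] = α·f + λ·g, X_g(ψ)=0 and X_f(ψ) has no zeros on U, then
[g, (1/X_f(ψ))·f] = (λ/X_f(ψ))·g on U. -/
theorem stmt5 {n : ℕ} (U : Set (Fin n → ℝ)) (hU : IsOpen U)
    (f g : (Fin n → ℝ) → (Fin n → ℝ)) (α lam ψ : (Fin n → ℝ) → ℝ)
    (hf : ContDiff ℝ (⊤ : ℕ∞) f) (hg : ContDiff ℝ (⊤ : ℕ∞) g)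
    (hα : ContDiff ℝ (⊤ : ℕ∞) α) (hlam : ContDiff ℝ (⊤ : ℕ∞) lam) (hψ : ContDiff ℝ (⊤ : ℕ∞) ψ)
    (hbr : ∀ x ∈ U, lieBracket g f x = α x • f x + lam x • g x)
    (hfi : ∀ x ∈ U, lieDeriv g ψ x = 0)
    (hnz : ∀ x ∈ U, lieDeriv f ψ x ≠ 0) :
    ∀ x ∈ U, lieBracket g (fun y => (lieDeriv f ψ y)⁻¹ • f y) x
      = (lam x / lieDeriv f ψ x) • g x := by
  intro x hx
  -- smoothness of the derivative of ψ
  have hψ' : ContDiff ℝ (⊤ : ℕ∞) (fderiv ℝ ψ) := hψ.fderiv_right (by simp)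
  -- smoothness of h := X_f ψ
  have hh : ContDiff ℝ (⊤ : ℕ∞) (lieDeriv f ψ) := hψ'.clm_apply hf
  have hhd : DifferentiableAt ℝ (lieDeriv f ψ) x := (hh.differentiable (by simp)).differentiableAt
  have hfd : DifferentiableAt ℝ f x := (hf.differentiable (by simp)).differentiableAt
  have hgd : DifferentiableAt ℝ g x := (hg.differentiable (by simp)).differentiableAt
  have hψd : DifferentiableAt ℝ (fderiv ℝ ψ) x := (hψ'.differentiable (by simp)).differentiableAt
  have hψd' : DifferentiableAt ℝ ψ x := (hψ.differentiable (by simp)).differentiableAt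
  have hne : lieDeriv f ψ x ≠ 0 := hnz x hx
  -- second derivative symmetry
  have hsymm : ∀ v w, fderiv ℝ (fderiv ℝ ψ) x v w = fderiv ℝ (fderiv ℝ ψ) x w v :=
    hψ.contDiffAt.isSymmSndFDerivAt (by rw [minSmoothness_of_isRCLikeNormedField]; exact WithTop.coe_le_coe.mpr le_top)
  -- derivative of X_g ψ vanishes on U
  have hXg0 : fderiv ℝ (lieDeriv g ψ) x = 0 := by
    have : lieDeriv g ψ =ᶠ[nhds x] (fun _ => (0:ℝ)) := by
      filter_upwards [hU.mem_nhds hx] with y hy using hfi y hy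
    rw [this.fderiv_eq, fderiv_const_apply]
  -- expand fderiv (lieDeriv f ψ) and fderiv (lieDeriv g ψ)
  have expandf : fderiv ℝ (lieDeriv f ψ) x =
      (fderiv ℝ ψ x).comp (fderiv ℝ f x) + (fderiv ℝ (fderiv ℝ ψ) x).flip (f x) :=
    fderiv_clm_apply hψd hfd
  have expandg : fderiv ℝ (lieDeriv g ψ) x =
      (fderiv ℝ ψ x).comp (fderiv ℝ g x) + (fderiv ℝ (fderiv ℝ ψ) x).flip (g x) :=
    fderiv_clm_apply hψd hgd
  -- key: X_g (X_f ψ) = α • X_f ψ at x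
  have key : fderiv ℝ (lieDeriv f ψ) x (g x) = α x * lieDeriv f ψ x := by
    have h1 : fderiv ℝ (lieDeriv f ψ) x (g x)
        = fderiv ℝ ψ x (fderiv ℝ f x (g x)) + fderiv ℝ (fderiv ℝ ψ) x (g x) (f x) := by
      rw [expandf]; rfl
    have h2 : (0:ℝ)
        = fderiv ℝ ψ x (fderiv ℝ g x (f x)) + fderiv ℝ (fderiv ℝ ψ) x (f x) (g x) := by
      have := congrFun (congrArg DFunLike.coe hXg0) (f x)
      rw [expandg] at this
      simpa using this.symm
    have h3 : fderiv ℝ (lieDeriv f ψ) x (g x)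
        = fderiv ℝ ψ x (lieBracket g f x) := by
      rw [h1, lieBracket, map_sub]
      have hs := hsymm (g x) (f x)
      linarith [h2, hs]
    rw [h3, hbr x hx, map_add, map_smul, map_smul]
    have : fderiv ℝ ψ x (g x) = 0 := hfi x hx
    rw [this]
    simp [lieDeriv]
  -- derivative of the inverse of h
  have hinv : HasFDerivAt (fun y => (lieDeriv f ψ y)⁻¹)
      ((ContinuousLinearMap.smulRight (1 : ℝ →L[ℝ] ℝ) (-((lieDeriv f ψ x) ^ 2)⁻¹)).comp
        (fderiv ℝ (lieDeriv f ψ) x)) x :=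
    (hasFDerivAt_inv hne).comp x hhd.hasFDerivAt
  have hinvd : DifferentiableAt ℝ (fun y => (lieDeriv f ψ y)⁻¹) x := hinv.differentiableAt
  -- expand the bracket
  have hexp : fderiv ℝ (fun y => (lieDeriv f ψ y)⁻¹ • f y) x =
      (lieDeriv f ψ x)⁻¹ • fderiv ℝ f x +
        (fderiv ℝ (fun y => (lieDeriv f ψ y)⁻¹) x).smulRight (f x) :=
    fderiv_smul hinvd hfd
  have hinvval : fderiv ℝ (fun y => (lieDeriv f ψ y)⁻¹) x (g x)
      = -(α x) * (lieDeriv f ψ x)⁻¹ := by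
    rw [hinv.fderiv]
    simp only [ContinuousLinearMap.comp_apply, ContinuousLinearMap.smulRight_apply,
      ContinuousLinearMap.one_apply, key]
    field_simp
    ring_nf; rw [← mul_pow, mul_inv_cancel₀ hne]; ring
  have hsplit : fderiv ℝ f x (g x) = (α x • f x + lam x • g x) + fderiv ℝ g x (f x) := by
    have hb := hbr x hx
    rw [lieBracket] at hb
    exact eq_add_of_sub_eq hb
  simp only [lieBracket]
  rw [hexp]
  simp only [ContinuousLinearMap.add_apply, ContinuousLinearMap.smul_apply,
    ContinuousLinearMap.smulRight_apply, hinvval, hsplit, map_smul]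
  ext i
  simp only [Pi.add_apply, Pi.sub_apply, Pi.smul_apply, smul_eq_mul]
  field_simp
  ring
end

section
/- Let γ : ℝ → ℝ and ν : ℝ³ → ℝ be smooth. On U = {x ∈ ℝ³ : x₀ ≠ 0, x₁ ≠ 0} define Ĥ(x) = (1 + ν(x)x₀, x₂ + ν(x)x₁, γ(x₂)/x₁) and σ₁(x) = x₁/x₀, σ₂(x) = x₂. Then x₀·X_Ĥ(σ₁)(x) = σ₂(x) − σ₁(x) and x₀·X_Ĥ(σ₂)(x) = γ(σ₂(x))/σ₁(x) on U. -/
/-- Orbital reduction identities for Ĥ = (1+νx₀, x₂+νx₁, γ(x₂)/x₁) with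
σ₁ = x₁/x₀, σ₂ = x₂ and rescaling factor x₀. -/
theorem stmt12 (γ : ℝ → ℝ) (ν : (Fin 3 → ℝ) → ℝ)
    (hγ : ContDiff ℝ (⊤ : ℕ∞) γ) (hν : ContDiff ℝ (⊤ : ℕ∞) ν) :
    ∀ x : Fin 3 → ℝ, x 0 ≠ 0 → x 1 ≠ 0 →
      x 0 * lieDeriv
          (fun x : Fin 3 → ℝ => ![1 + ν x * x 0, x 2 + ν x * x 1, γ (x 2) / x 1])
          (fun x : Fin 3 → ℝ => x 1 / x 0) x
        = x 2 - x 1 / x 0 ∧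
      x 0 * lieDeriv
          (fun x : Fin 3 → ℝ => ![1 + ν x * x 0, x 2 + ν x * x 1, γ (x 2) / x 1])
          (fun x : Fin 3 → ℝ => x 2) x
        = γ (x 2) / (x 1 / x 0) := by
  intro x h0 h1
  have p0 : HasFDerivAt (fun x : Fin 3 → ℝ => x 0)
      (ContinuousLinearMap.proj (R := ℝ) (φ := fun _ : Fin 3 => ℝ) 0) x :=
    hasFDerivAt_apply 0 x
  have p1 : HasFDerivAt (fun x : Fin 3 → ℝ => x 1)
      (ContinuousLinearMap.proj (R := ℝ) (φ := fun _ : Fin 3 => ℝ) 1) x :=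
    hasFDerivAt_apply 1 x
  have p2 : HasFDerivAt (fun x : Fin 3 → ℝ => x 2)
      (ContinuousLinearMap.proj (R := ℝ) (φ := fun _ : Fin 3 => ℝ) 2) x :=
    hasFDerivAt_apply 2 x
  have hinv : HasFDerivAt (fun x : Fin 3 → ℝ => (x 0)⁻¹)
      ((-((x 0) ^ 2)⁻¹) • ContinuousLinearMap.proj (R := ℝ) (φ := fun _ : Fin 3 => ℝ) 0) x :=
    (hasDerivAt_inv h0).comp_hasFDerivAt x p0
  have hdiv : HasFDerivAt (fun x : Fin 3 → ℝ => x 1 / x 0)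
      (x 1 • ((-((x 0) ^ 2)⁻¹) • ContinuousLinearMap.proj (R := ℝ) (φ := fun _ : Fin 3 => ℝ) 0)
        + (x 0)⁻¹ • ContinuousLinearMap.proj (R := ℝ) (φ := fun _ : Fin 3 => ℝ) 1) x := by
    simpa [div_eq_mul_inv] using p1.fun_mul hinv
  constructor
  · rw [lieDeriv, hdiv.fderiv]
    simp only [ContinuousLinearMap.add_apply, ContinuousLinearMap.neg_apply, ContinuousLinearMap.smul_apply,
      ContinuousLinearMap.proj_apply, Matrix.cons_val_zero, Matrix.cons_val_one,
      Matrix.head_cons, smul_eq_mul]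
    field_simp
    ring
  · rw [lieDeriv, p2.fderiv]
    simp only [ContinuousLinearMap.proj_apply, Matrix.cons_val_two, Matrix.tail_cons,
      Matrix.head_cons]
    field_simp
end

section
/- Fix ν ∈ ℝ. Let y : I → ℝ be a twice differentiable function on an open interval I ⊆ ℝ with y(t) ≠ 0 and ẏ(t) + ν t ẏ(t) − ν y(t) > 0 for all t ∈ I, satisfying y(t)·ÿ(t)·(1+νt)² = (ẏ(t) + νt·ẏ(t) − ν·y(t))² on I. Then the function F(t) := (t / y(t))·(ẏ(t) + νt·ẏ(t) − ν·y(t)) − log(ẏ(t) + νt·ẏ(t) − ν·y(t)) is constant on I. -/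
/-!
Write `P = ẏ (1 + ν t) - ν y`. Then `Ṗ = (1 + ν t) ÿ`, and the equation reads
`y ÿ (1 + ν t)² = P²`; it forces `1 + ν t ≠ 0` because `P > 0`, so `Ṗ = P² / (y (1 + ν t))`.
Substituting this into the derivative of `F = t P / y - log P`, the three resulting terms cancel.
-/

theorem Convex.is_const_of_hasDerivAt_zero {𝕜 G : Type*} [RCLike 𝕜] [NormedAddCommGroup G]
    [NormedSpace 𝕜 G] {f : 𝕜 → G} {s : Set 𝕜} (hs : Convex ℝ s)
    (hf : ∀ x ∈ s, HasDerivAt f 0 x) {x y : 𝕜} (hx : x ∈ s) (hy : y ∈ s) : f x = f y := by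
  have h := hs.norm_image_sub_le_of_norm_hasDerivWithin_le
    (fun z hz => (hf z hz).hasDerivWithinAt) (fun _ _ => norm_zero.le) hx hy
  rw [zero_mul, norm_le_zero_iff, sub_eq_zero] at h
  exact h.symm

section FirstIntegral

variable (ν : ℝ) (y y' : ℝ → ℝ)

def reducedDeriv (t : ℝ) : ℝ := y' t + ν * t * y' t - ν * y t

noncomputable def firstIntegral (t : ℝ) : ℝ :=
  t / y t * reducedDeriv ν y y' t - Real.log (reducedDeriv ν y y' t)

variable {ν y y'} {y'' : ℝ → ℝ} {t : ℝ}

theorem hasDerivAt_reducedDeriv (hy : HasDerivAt y (y' t) t) (hy' : HasDerivAt y' (y'' t) t) :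
    HasDerivAt (reducedDeriv ν y y') ((1 + ν * t) * y'' t) t := by
  have hlin : HasDerivAt (fun s => ν * s) ν t := by
    simpa using (hasDerivAt_id t).const_mul ν
  exact ((hy'.add (hlin.mul hy')).sub (hy.const_mul ν)).congr_deriv (by ring)

theorem one_add_mul_ne_zero_of_ode (hpos : 0 < reducedDeriv ν y y' t)
    (hode : y t * y'' t * (1 + ν * t) ^ 2 = reducedDeriv ν y y' t ^ 2) : 1 + ν * t ≠ 0 := by
  intro h
  rw [h, zero_pow two_ne_zero, mul_zero] at hode
  exact hpos.ne' (pow_eq_zero_iff two_ne_zero |>.mp hode.symm)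

theorem hasDerivAt_firstIntegral_zero (hy : HasDerivAt y (y' t) t)
    (hy' : HasDerivAt y' (y'' t) t) (hne : y t ≠ 0) (hpos : 0 < reducedDeriv ν y y' t)
    (hode : y t * y'' t * (1 + ν * t) ^ 2 = reducedDeriv ν y y' t ^ 2) :
    HasDerivAt (firstIntegral ν y y') 0 t := by
  have hP := hasDerivAt_reducedDeriv (ν := ν) hy hy'
  have hden := one_add_mul_ne_zero_of_ode hpos hode
  refine ((((hasDerivAt_id t).div hy hne).mul hP).sub (hP.log hpos.ne')).congr_deriv ?_
  set P := reducedDeriv ν y y' t with hPdef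
  set k := 1 + ν * t with hk
  have hy'' : y'' t = P ^ 2 / (y t * k ^ 2) := by
    field_simp
    linear_combination hode
  have hy't : y' t = (P + ν * y t) / k := by
    field_simp
    simp only [hPdef, hk, reducedDeriv]
    ring
  simp only [id, Pi.div_apply]
  rw [hy'', hy't]
  field_simp
  ring

end FirstIntegral

theorem stmt13_general (ν : ℝ) (I : Set ℝ) (hconv : Convex ℝ I)
    (y y' y'' : ℝ → ℝ)
    (hy : ∀ t ∈ I, HasDerivAt y (y' t) t)
    (hy' : ∀ t ∈ I, HasDerivAt y' (y'' t) t)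
    (hne : ∀ t ∈ I, y t ≠ 0)
    (hpos : ∀ t ∈ I, y' t + ν * t * y' t - ν * y t > 0)
    (hode : ∀ t ∈ I, y t * y'' t * (1 + ν * t)^2
        = (y' t + ν * t * y' t - ν * y t)^2) :
    ∀ s ∈ I, ∀ t ∈ I,
      (s / y s) * (y' s + ν * s * y' s - ν * y s)
          - Real.log (y' s + ν * s * y' s - ν * y s)
      = (t / y t) * (y' t + ν * t * y' t - ν * y t)
          - Real.log (y' t + ν * t * y' t - ν * y t) := by
  intro s hs t ht
  exact hconv.is_const_of_hasDerivAt_zero (f := firstIntegral ν y y')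
    (fun x hx => hasDerivAt_firstIntegral_zero (hy x hx) (hy' x hx) (hne x hx) (hpos x hx)
      (hode x hx)) hs ht

/-- Along any solution of y·ÿ·(1+νt)² = (ẏ + νtẏ − νy)² with y ≠ 0 and
ẏ + νtẏ − νy > 0, the function F(t) = (t/y)(ẏ+νtẏ−νy) − log(ẏ+νtẏ−νy)
is constant. -/
theorem stmt13 (ν : ℝ) (I : Set ℝ) (hI : IsOpen I) (hconv : Convex ℝ I)
    (y y' y'' : ℝ → ℝ)
    (hy : ∀ t ∈ I, HasDerivAt y (y' t) t)
    (hy' : ∀ t ∈ I, HasDerivAt y' (y'' t) t)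
    (hne : ∀ t ∈ I, y t ≠ 0)
    (hpos : ∀ t ∈ I, y' t + ν * t * y' t - ν * y t > 0)
    (hode : ∀ t ∈ I, y t * y'' t * (1 + ν * t)^2
        = (y' t + ν * t * y' t - ν * y t)^2) :
    ∀ s ∈ I, ∀ t ∈ I,
      (s / y s) * (y' s + ν * s * y' s - ν * y s)
          - Real.log (y' s + ν * s * y' s - ν * y s)
      = (t / y t) * (y' t + ν * t * y' t - ν * y t)
          - Real.log (y' t + ν * t * y' t - ν * y t) :=
  stmt13_general ν I hconv y y' y'' hy hy' hne hpos hode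
end

section
/- On U = {x ∈ ℝ³ : 1 + x₁x₂ ≠ 0}, define H(x) = (1/(1+x₁x₂))·(1 + x₁x₂, x₂ + x₁², x₁x₂), and σ₁(x) = x₀ − x₂, σ₂(x) = x₂/x₁ (assume additionally x₁ ≠ 0). Then X_H(σ₁)(x) = 1/(1+x₁x₂) and X_H(σ₂)(x) = −σ₂(x)²/(1+x₁x₂); consequently (1+x₁x₂)·X_H(σ₁) = 1 and (1+x₁x₂)·X_H(σ₂) = −σ₂², exhibiting an orbital reduction of ẋ = H(x) to the planar system ż₁ = 1, ż₂ = −z₂². -/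
/-!
Rescaling a vector field by a scalar function rescales its Lie derivatives pointwise, and
`(1 + x₁x₂) • H` is the polynomial field `F = (1 + x₁x₂, x₂ + x₁², x₁x₂)`. So it suffices to
compute `X_F(x₀ - x₂) = 1 + x₁x₂ - x₁x₂ = 1` and
`X_F(x₂/x₁) = (x₁ · x₁x₂ - x₂(x₂ + x₁²))/x₁² = -(x₂/x₁)²`.
-/

section LieDeriv

variable {n : ℕ}

lemma lieDeriv_eq_of_hasFDerivAt {f : (Fin n → ℝ) → (Fin n → ℝ)} {φ : (Fin n → ℝ) → ℝ}
    {φ' : (Fin n → ℝ) →L[ℝ] ℝ} {x : Fin n → ℝ} (h : HasFDerivAt φ φ' x) :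
    lieDeriv f φ x = φ' (f x) := by
  rw [lieDeriv, h.fderiv]

lemma lieDeriv_smul_field (c : (Fin n → ℝ) → ℝ) (f : (Fin n → ℝ) → (Fin n → ℝ))
    (φ : (Fin n → ℝ) → ℝ) (x : Fin n → ℝ) :
    lieDeriv (fun y => c y • f y) φ x = c x * lieDeriv f φ x :=
  (fderiv ℝ φ x).map_smul (c x) (f x)

lemma lieDeriv_apply_sub_apply (f : (Fin n → ℝ) → (Fin n → ℝ)) (i j : Fin n) (x : Fin n → ℝ) :
    lieDeriv f (fun y => y i - y j) x = f x i - f x j :=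
  lieDeriv_eq_of_hasFDerivAt ((hasFDerivAt_apply i x).sub (hasFDerivAt_apply j x))

lemma lieDeriv_apply_div_apply (f : (Fin n → ℝ) → (Fin n → ℝ)) (i j : Fin n) {x : Fin n → ℝ}
    (hx : x j ≠ 0) :
    lieDeriv f (fun y => y i / y j) x = (x j * f x i - x i * f x j) / x j ^ 2 := by
  have hproj (k : Fin n) : HasFDerivAt (fun y : Fin n → ℝ => y k)
      (ContinuousLinearMap.proj (R := ℝ) k) x := hasFDerivAt_apply k x
  have hquot : HasFDerivAt (fun y : Fin n → ℝ => y i * (y j)⁻¹) _ x :=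
    (hproj i).mul ((hasDerivAt_inv hx).comp_hasFDerivAt x (hproj j))
  simp only [div_eq_mul_inv]
  rw [lieDeriv_eq_of_hasFDerivAt hquot]
  simp only [add_apply, smul_apply, ContinuousLinearMap.proj_apply, smul_eq_mul]
  field_simp
  ring

end LieDeriv

/-- Orbital reduction of H = (1/(1+x₁x₂))·(1+x₁x₂, x₂+x₁², x₁x₂) by σ₁ = x₀−x₂,
σ₂ = x₂/x₁ onto ż₁ = 1, ż₂ = −z₂², with factor μ = 1+x₁x₂. -/
theorem stmt16 :
    ∀ x : Fin 3 → ℝ, 1 + x 1 * x 2 ≠ 0 → x 1 ≠ 0 →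
      (lieDeriv
          (fun x : Fin 3 → ℝ =>
            (1 + x 1 * x 2)⁻¹ • ![1 + x 1 * x 2, x 2 + (x 1)^2, x 1 * x 2])
          (fun x : Fin 3 → ℝ => x 0 - x 2) x = 1 / (1 + x 1 * x 2)) ∧
      (lieDeriv
          (fun x : Fin 3 → ℝ =>
            (1 + x 1 * x 2)⁻¹ • ![1 + x 1 * x 2, x 2 + (x 1)^2, x 1 * x 2])
          (fun x : Fin 3 → ℝ => x 2 / x 1) x
        = -(x 2 / x 1)^2 / (1 + x 1 * x 2)) ∧
      ((1 + x 1 * x 2) * lieDeriv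
          (fun x : Fin 3 → ℝ =>
            (1 + x 1 * x 2)⁻¹ • ![1 + x 1 * x 2, x 2 + (x 1)^2, x 1 * x 2])
          (fun x : Fin 3 → ℝ => x 0 - x 2) x = 1) ∧
      ((1 + x 1 * x 2) * lieDeriv
          (fun x : Fin 3 → ℝ =>
            (1 + x 1 * x 2)⁻¹ • ![1 + x 1 * x 2, x 2 + (x 1)^2, x 1 * x 2])
          (fun x : Fin 3 → ℝ => x 2 / x 1) x = -(x 2 / x 1)^2) := by
  intro x hμ h1
  have hσ₁ : lieDeriv (fun x : Fin 3 → ℝ => ![1 + x 1 * x 2, x 2 + (x 1)^2, x 1 * x 2])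
      (fun x => x 0 - x 2) x = 1 := by
    rw [lieDeriv_apply_sub_apply]
    simp only [Matrix.cons_val_zero, Matrix.cons_val, add_sub_cancel_right]
  have hσ₂ : lieDeriv (fun x : Fin 3 → ℝ => ![1 + x 1 * x 2, x 2 + (x 1)^2, x 1 * x 2])
      (fun x => x 2 / x 1) x = -(x 2 / x 1) ^ 2 := by
    rw [lieDeriv_apply_div_apply _ 2 1 h1]
    simp only [Matrix.cons_val, Matrix.cons_val_one, Matrix.cons_val_zero]
    field_simp
    ring
  rw [lieDeriv_smul_field, lieDeriv_smul_field, hσ₁, hσ₂]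
  refine ⟨by ring, by ring, ?_, ?_⟩ <;> field_simp
end
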